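/- Let G be a group with finite generating set S and Cayley graph Γ, and let g, h ∈ G. If T : C(g) → C(h) is a weak cone equivalence (a graph isomorphism with T(g) = h), then for every edge {k₁,k₂} of C(g): if {k₁,k₂} is tangent then {T(k₁),T(k₂)} is tangent, if {k₁,k₂} is norm increasing from k₁ then {T(k₁),T(k₂)} is norm increasing from T(k₁), and if {k₁,k₂} is norm decreasing from k₁ then {T(k₁),T(k₂)} is norm decreasing from T(k₁). -/

import Mathlib

variable {G : Type*} [Group G]

noncomputable def wordLength (S : Set G) (g : G) : ℕ :=
  sInf {n | ∃ w : List G, (∀ x ∈ w, x ∈ S ∪ S⁻¹) ∧ w.length = n ∧ w.prod = g}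

def cayley (S : Set G) : SimpleGraph G where
  Adj g h := g ≠ h ∧ h * g⁻¹ ∈ S ∪ S⁻¹
  symm := by
    refine ⟨?_⟩
    rintro g h ⟨hne, hmem⟩
    refine ⟨hne.symm, ?_⟩
    have key : g * h⁻¹ = (h * g⁻¹)⁻¹ := by group
    rw [key]
    rcases hmem with h1 | h1
    · exact Or.inr (by simpa [Set.mem_inv] using h1)
    · exact Or.inl (by simpa [Set.mem_inv] using h1)
  loopless := ⟨fun g h => h.1 rfl⟩

def coneSet (S : Set G) (g : G) : Set G :=
  {h | wordLength S h = wordLength S g + (cayley S).dist g h}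

lemma self_mem_coneSet (S : Set G) (g : G) : g ∈ coneSet S g := by
  simp [coneSet]

/-!
A geodesic of `Γ` from `g` to a point of the cone `C(g)` stays inside `C(g)`, so the graph
metric of `C(g)` agrees with that of `Γ` at `g` and `|k| = |g| + d_{C(g)}(g, k)` for `k ∈ C(g)`.
A graph isomorphism `T` with `T g = h` preserves the cone metrics from the base points, hence
`|T k| - |h| = |k| - |g|` for every `k ∈ C(g)`.
-/

namespace SimpleGraph

variable {V W : Type*} {A : SimpleGraph V} {B : SimpleGraph W}

theorem Iso.dist_eq (f : A ≃g B) (u v : V) : B.dist (f u) (f v) = A.dist u v := by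
  rw [dist_eq_sInf, dist_eq_sInf]
  congr 1
  ext n
  constructor
  · rintro ⟨p, rfl⟩
    exact ⟨(p.map f.symm.toHom).copy (by simp) (by simp), by simp⟩
  · rintro ⟨p, rfl⟩
    exact ⟨p.map f.toHom, by simp⟩

theorem dist_induce_eq_of_walk {s : Set V} {u v : s} (p : A.Walk u v)
    (hp : p.length = A.dist u v) (hs : ∀ w ∈ p.support, w ∈ s) :
    (A.induce s).dist u v = A.dist u v := by
  have hq := congr_arg Walk.length (p.map_induce hs)
  rw [Walk.length_map] at hq
  apply le_antisymm
  · exact hp ▸ hq ▸ dist_le _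
  · obtain ⟨q, hq'⟩ := Reachable.exists_walk_length_eq_dist ⟨p.induce s hs⟩
    rw [← hq', ← Walk.length_map (Embedding.induce s).toHom]
    exact dist_le _

end SimpleGraph

section WordLength

variable {S : Set G}

theorem wordLength_mul_le_succ {x : G} (hx : x ∈ S ∪ S⁻¹) (a : G) :
    wordLength S (x * a) ≤ wordLength S a + 1 := by
  by_cases ha : {n | ∃ w : List G, (∀ y ∈ w, y ∈ S ∪ S⁻¹) ∧ w.length = n ∧ w.prod = a}.Nonempty
  · obtain ⟨w, hw, hl, hp⟩ := Nat.sInf_mem ha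
    refine Nat.sInf_le ⟨x :: w, ?_, by rw [List.length_cons, hl]; rfl, by simp [hp]⟩
    simpa [List.forall_mem_cons] using And.intro hx hw
  · -- if `a` is not a product of generators then neither is `x * a`, and `sInf ∅ = 0`
    refine (Nat.sInf_eq_zero.2 (Or.inr ?_)).trans_le (Nat.zero_le _)
    refine Set.eq_empty_of_forall_notMem fun n ⟨w, hw, hl, hp⟩ => ha ?_
    refine ⟨_, x⁻¹ :: w, ?_, rfl, by simp [hp]⟩
    have hx' : x⁻¹ ∈ S ∪ S⁻¹ := by simpa [or_comm] using hx
    simpa [List.forall_mem_cons] using And.intro hx' hw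

theorem wordLength_le_of_adj {a b : G} (hab : (cayley S).Adj a b) :
    wordLength S b ≤ wordLength S a + 1 := by
  simpa using wordLength_mul_le_succ hab.2 a

theorem wordLength_le_add_length {a b : G} (p : (cayley S).Walk a b) :
    wordLength S b ≤ wordLength S a + p.length := by
  induction p with
  | nil => simp
  | cons hadj p ih =>
    rw [SimpleGraph.Walk.length_cons]
    have := wordLength_le_of_adj hadj
    omega

theorem wordLength_le_add_dist {a b : G} (hab : (cayley S).Reachable a b) :
    wordLength S b ≤ wordLength S a + (cayley S).dist a b := by
  obtain ⟨p, hp⟩ := hab.exists_walk_length_eq_dist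
  exact hp ▸ wordLength_le_add_length p

end WordLength

section Cone

variable {S : Set G} {g : G}

theorem mem_coneSet_of_mem_support {k : G} (hk : k ∈ coneSet S g) (p : (cayley S).Walk g k)
    (hp : p.length = (cayley S).dist g k) {m : G} (hm : m ∈ p.support) : m ∈ coneSet S g := by
  classical
  have hsplit := congr_arg SimpleGraph.Walk.length (p.take_spec hm)
  rw [SimpleGraph.Walk.length_append] at hsplit
  have h1 := SimpleGraph.dist_le (p.takeUntil m hm)
  have h2 := wordLength_le_add_dist ⟨p.takeUntil m hm⟩
  have h3 := wordLength_le_add_length (p.dropUntil m hm)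
  have hk' : wordLength S k = wordLength S g + (cayley S).dist g k := hk
  show wordLength S m = wordLength S g + (cayley S).dist g m
  omega

theorem dist_induce_coneSet (k : coneSet S g) :
    ((cayley S).induce (coneSet S g)).dist ⟨g, self_mem_coneSet S g⟩ k =
      (cayley S).dist g k := by
  by_cases hr : (cayley S).Reachable g k
  · obtain ⟨p, hp⟩ := hr.exists_walk_length_eq_dist
    exact SimpleGraph.dist_induce_eq_of_walk (s := coneSet S g) (u := ⟨g, _⟩) p hp
      fun m hm => mem_coneSet_of_mem_support k.2 p hp hm
  · rw [SimpleGraph.dist_eq_zero_of_not_reachable hr,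
      SimpleGraph.dist_eq_zero_of_not_reachable fun hr' =>
        hr (hr'.map (SimpleGraph.Embedding.induce (coneSet S g)).toHom)]

theorem wordLength_eq_add_dist_induce_coneSet (k : coneSet S g) :
    wordLength S (k : G) =
      wordLength S g + ((cayley S).induce (coneSet S g)).dist ⟨g, self_mem_coneSet S g⟩ k := by
  rw [dist_induce_coneSet]
  exact k.2

theorem wordLength_apply_add_eq_of_weakEquiv {h : G}
    (T : (cayley S).induce (coneSet S g) ≃g (cayley S).induce (coneSet S h))
    (hT : ((T ⟨g, self_mem_coneSet S g⟩ : coneSet S h) : G) = h) (k : coneSet S g) :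
    wordLength S ((T k : coneSet S h) : G) + wordLength S g =
      wordLength S (k : G) + wordLength S h := by
  have hTg : T ⟨g, self_mem_coneSet S g⟩ = ⟨h, self_mem_coneSet S h⟩ := Subtype.ext hT
  rw [wordLength_eq_add_dist_induce_coneSet k, wordLength_eq_add_dist_induce_coneSet (T k),
    ← hTg, T.dist_eq]
  ring

end Cone

theorem weak_equivalence_preserves_edge_types_general
    (S : Set G) (g h : G)
    (T : (cayley S).induce (coneSet S g) ≃g (cayley S).induce (coneSet S h))
    (hT : ((T ⟨g, self_mem_coneSet S g⟩ : coneSet S h) : G) = h)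
    (k₁ k₂ : coneSet S g) :
    (wordLength S (k₁ : G) = wordLength S (k₂ : G) →
      wordLength S ((T k₁ : coneSet S h) : G) = wordLength S ((T k₂ : coneSet S h) : G)) ∧
    (wordLength S (k₂ : G) = wordLength S (k₁ : G) + 1 →
      wordLength S ((T k₂ : coneSet S h) : G) = wordLength S ((T k₁ : coneSet S h) : G) + 1) ∧
    (wordLength S (k₁ : G) = wordLength S (k₂ : G) + 1 →
      wordLength S ((T k₁ : coneSet S h) : G) = wordLength S ((T k₂ : coneSet S h) : G) + 1) := by
  have h₁ := wordLength_apply_add_eq_of_weakEquiv T hT k₁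
  have h₂ := wordLength_apply_add_eq_of_weakEquiv T hT k₂
  omega

/-- A weak cone equivalence maps tangent, norm increasing and norm decreasing edges of the
cone to tangent, norm increasing and norm decreasing edges respectively. -/
theorem weak_equivalence_preserves_edge_types
    (S : Set G) (hS : S.Finite) (hgen : Subgroup.closure S = ⊤) (g h : G)
    (T : (cayley S).induce (coneSet S g) ≃g (cayley S).induce (coneSet S h))
    (hT : ((T ⟨g, self_mem_coneSet S g⟩ : coneSet S h) : G) = h)
    (k₁ k₂ : coneSet S g)
    (hadj : ((cayley S).induce (coneSet S g)).Adj k₁ k₂) :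
    (wordLength S (k₁ : G) = wordLength S (k₂ : G) →
      wordLength S ((T k₁ : coneSet S h) : G) = wordLength S ((T k₂ : coneSet S h) : G)) ∧
    (wordLength S (k₂ : G) = wordLength S (k₁ : G) + 1 →
      wordLength S ((T k₂ : coneSet S h) : G) = wordLength S ((T k₁ : coneSet S h) : G) + 1) ∧
    (wordLength S (k₁ : G) = wordLength S (k₂ : G) + 1 →
      wordLength S ((T k₁ : coneSet S h) : G) = wordLength S ((T k₂ : coneSet S h) : G) + 1) :=
  weak_equivalence_preserves_edge_types_general S g h T hT k₁ k₂
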